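/- Let d ≥ 1 and C ≥ 1. Let w : Fin C → EuclideanSpace ℝ (Fin d) and b : Fin C → ℝ define logits g(z) c = ⟪w c, z⟫ + b c, and let p(z) = softmax(g(z)). Fix z₀ ∈ EuclideanSpace ℝ (Fin d), a real λ ≥ 0, and a positive semidefinite matrix Σ : Matrix (Fin d) (Fin d) ℝ, and let ν = N(z₀, λ • Σ). Then the function (x, y) ↦ −log (∑_c p(x) c * p(y) c) is nonnegative, and its double Lebesgue integral satisfies ∫⁻ ∫⁻ ENNReal.ofReal (−log (∑_c p(x) c * p(y) c)) dν(x) dν(y) ≤ ENNReal.ofReal (−2 * ∑_c log (exp (g(z₀) c) / ∑_{c'} exp (g(z₀) c' + (λ/2) * (w c' − w c)ᵀ Σ (w c' − w c)))). -/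

import Mathlib

open MeasureTheory ProbabilityTheory Real
open scoped RealInnerProductSpace BigOperators ENNReal

/-- The multivariate Gaussian measure `N(μ, S)` on `EuclideanSpace ℝ (Fin d)` with mean `μ` and
positive semidefinite covariance matrix `S`, realized as the pushforward of the standard
Gaussian under the affine map `x ↦ μ + √S x`. -/
noncomputable def multiGaussian {d : ℕ} (μ : EuclideanSpace ℝ (Fin d))
    (S : Matrix (Fin d) (Fin d) ℝ) (hS : S.PosSemidef) :
    Measure (EuclideanSpace ℝ (Fin d)) :=
  (MeasureTheory.Measure.pi fun _ : Fin d => gaussianReal 0 1).map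
    (fun x => μ + (EuclideanSpace.equiv (Fin d) ℝ).symm (((hS.1.eigenvectorUnitary : Matrix (Fin d) (Fin d) ℝ) *
      Matrix.diagonal ((RCLike.ofReal : ℝ → ℝ) ∘ (√·) ∘ hS.1.eigenvalues) *
      (star hS.1.eigenvectorUnitary : Matrix (Fin d) (Fin d) ℝ)).mulVec x))

/-- The quadratic form `aᵀ S a = ∑ p q, a p * S p q * a q`. -/
def quadForm {d : ℕ} (S : Matrix (Fin d) (Fin d) ℝ) (a : EuclideanSpace ℝ (Fin d)) : ℝ :=
  ∑ p, ∑ q, a p * S p q * a q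

/-- Softmax of a vector of logits. -/
noncomputable def softmax {C : ℕ} (v : Fin C → ℝ) (c : Fin C) : ℝ :=
  Real.exp (v c) / ∑ c', Real.exp (v c')

/-- A nonnegative scalar multiple of a positive semidefinite matrix is positive semidefinite. -/
theorem posSemidef_smul {d : ℕ} {S : Matrix (Fin d) (Fin d) ℝ} (hS : S.PosSemidef)
    {c : ℝ} (hc : 0 ≤ c) : (c • S).PosSemidef := by
  refine Matrix.PosSemidef.of_dotProduct_mulVec_nonneg ?_ fun x => ?_
  · unfold Matrix.IsHermitian
    rw [Matrix.conjTranspose_smul, hS.1]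
    simp
  · rw [Matrix.smul_mulVec]
    simp only [dotProduct_smul, smul_eq_mul]
    exact mul_nonneg hc (hS.dotProduct_mulVec_nonneg x)

/-!
Softmax probabilities are positive and sum to one, so for every class `c` we have
`pⱼᵀ pₖ ≥ pⱼ c * pₖ c`; as every `log (p c)⁻¹` is nonnegative this gives
`-log (pⱼᵀ pₖ) ≤ ∑ c, log (pⱼ c)⁻¹ + ∑ c, log (pₖ c)⁻¹`. Jensen's inequality for the concave
logarithm bounds the expectation of `log (p c)⁻¹ = log ∑ c', exp (g c' - g c)` by the logarithm of
its expectation, and that expectation is a sum of Gaussian moment generating functions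
`E exp ⟪a, z⟫ = exp (⟪a, z₀⟫ + λ aᵀ Σ a / 2)` at `a = w c' - w c`.
-/

open Matrix

section StdGaussian

variable {ι : Type*} [Fintype ι]

lemma integrable_exp_dotProduct_pi_gaussianReal (u : ι → ℝ) :
    Integrable (fun x => rexp (u ⬝ᵥ x)) (Measure.pi fun _ : ι => gaussianReal 0 1) := by
  simp_rw [dotProduct, Real.exp_sum]
  exact Integrable.fintype_prod fun i => integrable_exp_mul_gaussianReal (u i)

lemma integral_exp_dotProduct_pi_gaussianReal (u : ι → ℝ) :
    ∫ x, rexp (u ⬝ᵥ x) ∂(Measure.pi fun _ : ι => gaussianReal 0 1) = rexp (u ⬝ᵥ u / 2) := by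
  simp_rw [dotProduct, Finset.sum_div, Real.exp_sum]
  rw [integral_fintype_prod_eq_prod (fun i y => rexp (u i * y))]
  refine Finset.prod_congr rfl fun i _ => ?_
  simpa [mgf, sq] using congrFun (mgf_id_gaussianReal (μ := 0) (v := 1)) (u i)

end StdGaussian

lemma transpose_cfc {n : Type*} [Fintype n] [DecidableEq n] (f : ℝ → ℝ) (S : Matrix n n ℝ) :
    (cfc f S)ᵀ = cfc f S := by
  simpa [star_eq_conjTranspose] using (IsSelfAdjoint.cfc (R := ℝ) (f := f) (a := S)).star_eq

lemma cfc_sqrt_mul_self {n : Type*} [Fintype n] [DecidableEq n] {S : Matrix n n ℝ}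
    (hS : S.PosSemidef) : cfc Real.sqrt S * cfc Real.sqrt S = S := by
  have hS' : IsSelfAdjoint S := hS.1
  calc cfc Real.sqrt S * cfc Real.sqrt S = cfc (fun x => √x * √x) S := (cfc_mul _ _ S).symm
    _ = cfc id S := cfc_congr fun x hx => by
        obtain ⟨i, rfl⟩ := hS.1.spectrum_real_eq_range_eigenvalues ▸ hx
        exact Real.mul_self_sqrt (hS.eigenvalues_nonneg i)
    _ = S := cfc_id ℝ S

lemma inner_toLp_mulVec {ι κ : Type*} [Fintype ι] [Fintype κ] (a : EuclideanSpace ℝ ι)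
    (M : Matrix ι κ ℝ) (x : κ → ℝ) : ⟪a, WithLp.toLp 2 (M *ᵥ x)⟫ = (Mᵀ *ᵥ a.ofLp) ⬝ᵥ x := by
  rw [EuclideanSpace.inner_eq_star_dotProduct, star_trivial, dotProduct_comm, mulVec_transpose,
    dotProduct_mulVec]

lemma quadForm_eq_dotProduct {d : ℕ} (S : Matrix (Fin d) (Fin d) ℝ)
    (a : EuclideanSpace ℝ (Fin d)) : quadForm S a = a.ofLp ⬝ᵥ S *ᵥ a.ofLp := by
  simp [quadForm, dotProduct, mulVec, Finset.mul_sum, mul_assoc]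

lemma quadForm_smul {d : ℕ} (c : ℝ) (S : Matrix (Fin d) (Fin d) ℝ)
    (a : EuclideanSpace ℝ (Fin d)) : quadForm (c • S) a = c * quadForm S a := by
  simp [quadForm_eq_dotProduct, smul_mulVec]

lemma dotProduct_cfc_sqrt_mulVec_self {d : ℕ} {S : Matrix (Fin d) (Fin d) ℝ} (hS : S.PosSemidef)
    (a : EuclideanSpace ℝ (Fin d)) :
    (cfc Real.sqrt S *ᵥ a.ofLp) ⬝ᵥ (cfc Real.sqrt S *ᵥ a.ofLp) = quadForm S a := by
  conv_rhs => rw [quadForm_eq_dotProduct, ← cfc_sqrt_mul_self hS, ← mulVec_mulVec,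
    dotProduct_mulVec, ← mulVec_transpose, transpose_cfc]

section MultiGaussian

variable {d : ℕ} (μ : EuclideanSpace ℝ (Fin d)) {S : Matrix (Fin d) (Fin d) ℝ} (hS : S.PosSemidef)

lemma multiGaussian_eq_map :
    multiGaussian μ S hS = (Measure.pi fun _ : Fin d => gaussianReal 0 1).map
      (fun x => μ + WithLp.toLp 2 (cfc Real.sqrt S *ᵥ x)) := by
  rw [hS.1.cfc_eq Real.sqrt]; rfl

lemma continuous_affine_mulVec (M : Matrix (Fin d) (Fin d) ℝ) :
    Continuous fun x : Fin d → ℝ => μ + WithLp.toLp 2 (M *ᵥ x) := by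
  fun_prop

instance isProbabilityMeasure_multiGaussian : IsProbabilityMeasure (multiGaussian μ S hS) := by
  rw [multiGaussian_eq_map]
  exact Measure.isProbabilityMeasure_map (continuous_affine_mulVec μ _).aemeasurable

lemma exp_inner_add_cfc_sqrt_mulVec (a : EuclideanSpace ℝ (Fin d)) (x : Fin d → ℝ) :
    rexp ⟪a, μ + WithLp.toLp 2 (cfc Real.sqrt S *ᵥ x)⟫
      = rexp ⟪a, μ⟫ * rexp ((cfc Real.sqrt S *ᵥ a.ofLp) ⬝ᵥ x) := by
  rw [inner_add_right, Real.exp_add, inner_toLp_mulVec, transpose_cfc]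

lemma integrable_exp_inner_multiGaussian (a : EuclideanSpace ℝ (Fin d)) :
    Integrable (fun x => rexp ⟪a, x⟫) (multiGaussian μ S hS) := by
  have hc := continuous_affine_mulVec μ (cfc Real.sqrt S)
  rw [multiGaussian_eq_map, integrable_map_measure (by fun_prop) hc.aemeasurable]
  simp only [Function.comp_def, exp_inner_add_cfc_sqrt_mulVec]
  exact (integrable_exp_dotProduct_pi_gaussianReal _).const_mul _

lemma integral_exp_inner_multiGaussian (a : EuclideanSpace ℝ (Fin d)) :
    ∫ x, rexp ⟪a, x⟫ ∂multiGaussian μ S hS = rexp (⟪a, μ⟫ + quadForm S a / 2) := by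
  have hc := continuous_affine_mulVec μ (cfc Real.sqrt S)
  rw [multiGaussian_eq_map, integral_map hc.aemeasurable (by fun_prop)]
  simp only [exp_inner_add_cfc_sqrt_mulVec, integral_const_mul, integral_exp_dotProduct_pi_gaussianReal,
    dotProduct_cfc_sqrt_mulVec_self hS, Real.exp_add]

end MultiGaussian

section Softmax

variable {C : ℕ} (u v : Fin C → ℝ)

lemma inv_softmax (c : Fin C) : (softmax v c)⁻¹ = ∑ c', rexp (v c' - v c) := by
  simp_rw [softmax, inv_div, Finset.sum_div, Real.exp_sub]

variable [Nonempty (Fin C)]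

lemma sum_exp_pos : 0 < ∑ c, rexp (v c) :=
  Finset.sum_pos (fun _ _ => exp_pos _) Finset.univ_nonempty

lemma softmax_pos (c : Fin C) : 0 < softmax v c :=
  div_pos (exp_pos _) (sum_exp_pos v)

lemma sum_softmax : ∑ c, softmax v c = 1 := by
  unfold softmax
  rw [← Finset.sum_div, div_self (sum_exp_pos v).ne']

lemma softmax_le_one (c : Fin C) : softmax v c ≤ 1 :=
  sum_softmax v ▸ Finset.single_le_sum (fun c' _ => (softmax_pos v c').le) (Finset.mem_univ c)

lemma one_le_inv_softmax (c : Fin C) : 1 ≤ (softmax v c)⁻¹ :=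
  (one_le_inv₀ (softmax_pos v c)).2 (softmax_le_one v c)

lemma neg_log_sum_softmax_mul_nonneg : 0 ≤ -log (∑ c, softmax u c * softmax v c) := by
  have hle : ∑ c, softmax u c * softmax v c ≤ 1 :=
    calc ∑ c, softmax u c * softmax v c ≤ ∑ c, softmax u c :=
          Finset.sum_le_sum fun c _ =>
            mul_le_of_le_one_right (softmax_pos u c).le (softmax_le_one v c)
      _ = 1 := sum_softmax u
  have hpos : 0 < ∑ c, softmax u c * softmax v c :=
    Finset.sum_pos (fun c _ => mul_pos (softmax_pos u c) (softmax_pos v c)) Finset.univ_nonempty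
  linarith [Real.log_nonpos hpos.le hle]

lemma neg_log_sum_softmax_mul_le :
    -log (∑ c, softmax u c * softmax v c)
      ≤ ∑ c, log (softmax u c)⁻¹ + ∑ c, log (softmax v c)⁻¹ := by
  obtain ⟨c₀⟩ := ‹Nonempty (Fin C)›
  have hterm : softmax u c₀ * softmax v c₀ ≤ ∑ c, softmax u c * softmax v c :=
    Finset.single_le_sum (fun c _ => (mul_pos (softmax_pos u c) (softmax_pos v c)).le)
      (Finset.mem_univ c₀)
  have hsingle (q : Fin C → ℝ) : log (softmax q c₀)⁻¹ ≤ ∑ c, log (softmax q c)⁻¹ :=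
    Finset.single_le_sum (fun c _ => log_nonneg (one_le_inv_softmax q c)) (Finset.mem_univ c₀)
  have hlog := Real.log_le_log (mul_pos (softmax_pos u c₀) (softmax_pos v c₀)) hterm
  rw [Real.log_mul (softmax_pos u c₀).ne' (softmax_pos v c₀).ne'] at hlog
  simp only [Real.log_inv] at hsingle ⊢
  linarith [hsingle u, hsingle v]

end Softmax

section Jensen

variable {α : Type*} [MeasurableSpace α] {μ : Measure α} {f : α → ℝ}

lemma integrable_log_of_one_le (hf : Integrable f μ) (h1 : ∀ᵐ x ∂μ, 1 ≤ f x) :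
    Integrable (fun x => log (f x)) μ := by
  refine hf.mono' (Real.measurable_log.comp_aemeasurable hf.aemeasurable).aestronglyMeasurable ?_
  filter_upwards [h1] with x hx
  rw [Real.norm_eq_abs, abs_of_nonneg (log_nonneg hx)]
  linarith [log_le_sub_one_of_pos (zero_lt_one.trans_le hx)]

/- Jensen's inequality needs a closed convex domain of concavity; `[1, ∞)` is one for `log`
(`[0, ∞)` is not, because of the junk value `log 0 = 0`). -/
lemma integral_log_le_log_integral [IsProbabilityMeasure μ] (hf : Integrable f μ)
    (h1 : ∀ᵐ x ∂μ, 1 ≤ f x) : ∫ x, log (f x) ∂μ ≤ log (∫ x, f x ∂μ) :=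
  (strictConcaveOn_log_Ioi.concaveOn.subset (Set.Ici_subset_Ioi.2 one_pos)
    (convex_Ici 1)).le_map_integral
    (continuousOn_log.mono fun _ hx => (zero_lt_one.trans_le hx).ne')
    isClosed_Ici h1 hf (integrable_log_of_one_le hf h1)

end Jensen

lemma lintegral_lintegral_add_eq_two_mul {α : Type*} [MeasurableSpace α] {μ : Measure α}
    [IsProbabilityMeasure μ] {f : α → ℝ≥0∞} (hf : AEMeasurable f μ) :
    ∫⁻ y, ∫⁻ x, (f x + f y) ∂μ ∂μ = 2 * ∫⁻ x, f x ∂μ := by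
  simp only [lintegral_add_right' _ aemeasurable_const, lintegral_const, measure_univ, mul_one]
  rw [lintegral_add_right' _ hf, lintegral_const, measure_univ, mul_one, two_mul]

theorem lintegral_lintegral_neg_log_sum_softmax_mul_le {α : Type*} [MeasurableSpace α]
    {μ : Measure α} [IsProbabilityMeasure μ] {C : ℕ} [Nonempty (Fin C)] (v : α → Fin C → ℝ)
    (hv : ∀ c, Integrable (fun x => (softmax (v x) c)⁻¹) μ) :
    ∫⁻ y, ∫⁻ x, ENNReal.ofReal (-log (∑ c, softmax (v x) c * softmax (v y) c)) ∂μ ∂μ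
      ≤ ENNReal.ofReal (2 * ∑ c, log (∫ x, (softmax (v x) c)⁻¹ ∂μ)) := by
  have hv1 (c : Fin C) : ∀ᵐ x ∂μ, 1 ≤ (softmax (v x) c)⁻¹ :=
    ae_of_all _ fun x => one_le_inv_softmax (v x) c
  set F : α → ℝ := fun x => ∑ c, log (softmax (v x) c)⁻¹
  have hlog (c : Fin C) := integrable_log_of_one_le (hv c) (hv1 c)
  have hF : Integrable F μ := integrable_finsetSum _ fun c _ => hlog c
  have hF0 : 0 ≤ᵐ[μ] F :=
    ae_of_all _ fun x => Finset.sum_nonneg fun c _ => log_nonneg (one_le_inv_softmax (v x) c)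
  calc _ ≤ ∫⁻ y, ∫⁻ x, (ENNReal.ofReal (F x) + ENNReal.ofReal (F y)) ∂μ ∂μ :=
        lintegral_mono fun y => lintegral_mono fun x =>
          (ENNReal.ofReal_le_ofReal (neg_log_sum_softmax_mul_le _ _)).trans ENNReal.ofReal_add_le
    _ = 2 * ENNReal.ofReal (∫ x, F x ∂μ) := by
        rw [lintegral_lintegral_add_eq_two_mul hF.aemeasurable.ennreal_ofReal,
          ofReal_integral_eq_lintegral_ofReal hF hF0]
    _ ≤ 2 * ENNReal.ofReal (∑ c, log (∫ x, (softmax (v x) c)⁻¹ ∂μ)) := by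
        rw [integral_finsetSum _ fun c _ => hlog c]
        gcongr with c
        exact integral_log_le_log_integral (hv c) (hv1 c)
    _ = _ := by rw [ENNReal.ofReal_mul zero_le_two, ENNReal.ofReal_ofNat]

section AffineLogits

variable {d C : ℕ} (w : Fin C → EuclideanSpace ℝ (Fin d)) (b : Fin C → ℝ)
  (μ : EuclideanSpace ℝ (Fin d)) {S : Matrix (Fin d) (Fin d) ℝ} (hS : S.PosSemidef) (c : Fin C)

lemma inv_softmax_affine (x : EuclideanSpace ℝ (Fin d)) :
    (softmax (fun c => ⟪w c, x⟫ + b c) c)⁻¹ = ∑ c', rexp (b c' - b c) * rexp ⟪w c' - w c, x⟫ := by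
  rw [inv_softmax]
  refine Finset.sum_congr rfl fun c' _ => ?_
  rw [← Real.exp_add, inner_sub_left]
  ring_nf

lemma integrable_inv_softmax_affine_multiGaussian :
    Integrable (fun x => (softmax (fun c => ⟪w c, x⟫ + b c) c)⁻¹) (multiGaussian μ S hS) := by
  simp_rw [inv_softmax_affine]
  exact integrable_finsetSum _ fun c' _ => (integrable_exp_inner_multiGaussian μ hS _).const_mul _

lemma integral_inv_softmax_affine_multiGaussian :
    ∫ x, (softmax (fun c => ⟪w c, x⟫ + b c) c)⁻¹ ∂multiGaussian μ S hS
      = (∑ c', rexp (⟪w c', μ⟫ + b c' + quadForm S (w c' - w c) / 2)) / rexp (⟪w c, μ⟫ + b c) := by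
  simp_rw [inv_softmax_affine]
  rw [integral_finsetSum _ fun c' _ => (integrable_exp_inner_multiGaussian μ hS _).const_mul _,
    Finset.sum_div]
  refine Finset.sum_congr rfl fun c' _ => ?_
  rw [integral_const_mul, integral_exp_inner_multiGaussian, ← Real.exp_add, ← Real.exp_sub,
    inner_sub_left]
  ring_nf

end AffineLogits

theorem ifa_upper_bound_general (d C : ℕ) (hC : 1 ≤ C)
    (w : Fin C → EuclideanSpace ℝ (Fin d)) (b : Fin C → ℝ)
    (g : EuclideanSpace ℝ (Fin d) → Fin C → ℝ)
    (hg : ∀ z c, g z c = ⟪w c, z⟫ + b c)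
    (p : EuclideanSpace ℝ (Fin d) → Fin C → ℝ)
    (hp : ∀ z, p z = softmax (g z))
    (z₀ : EuclideanSpace ℝ (Fin d)) (lam : ℝ) (hlam : 0 ≤ lam)
    (Sig : Matrix (Fin d) (Fin d) ℝ) (hSig : Sig.PosSemidef) :
    (∀ x y : EuclideanSpace ℝ (Fin d), 0 ≤ -Real.log (∑ c, p x c * p y c)) ∧
    (∫⁻ y, ∫⁻ x, ENNReal.ofReal (-Real.log (∑ c, p x c * p y c))
        ∂(multiGaussian z₀ (lam • Sig) (posSemidef_smul hSig hlam))
        ∂(multiGaussian z₀ (lam • Sig) (posSemidef_smul hSig hlam)))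
      ≤ ENNReal.ofReal (-2 * ∑ c, Real.log (Real.exp (g z₀ c) /
          ∑ c', Real.exp (g z₀ c' + lam / 2 * quadForm Sig (w c' - w c)))) := by
  obtain rfl : p = fun z => softmax (g z) := funext hp
  obtain rfl : g = fun z c => ⟪w c, z⟫ + b c := funext₂ hg
  have : Nonempty (Fin C) := ⟨⟨0, hC⟩⟩
  refine ⟨fun x y => neg_log_sum_softmax_mul_nonneg _ _, ?_⟩
  refine (lintegral_lintegral_neg_log_sum_softmax_mul_le _ fun c =>
    integrable_inv_softmax_affine_multiGaussian w b z₀ _ c).trans_eq ?_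
  rw [neg_mul, ← mul_neg, ← Finset.sum_neg_distrib]
  congr 2
  refine Finset.sum_congr rfl fun c _ => ?_
  simp_rw [integral_inv_softmax_affine_multiGaussian, ← Real.log_inv, inv_div, quadForm_smul]
  congr! 4 with c'
  ring

/-- Proposition 1 (SF(DA)²): the implicit feature augmentation (IFA) loss is an upper bound of
the expected explicit feature augmentation loss over two i.i.d. Gaussian-augmented features. -/
theorem ifa_upper_bound (d C : ℕ) (hd : 1 ≤ d) (hC : 1 ≤ C)
    (w : Fin C → EuclideanSpace ℝ (Fin d)) (b : Fin C → ℝ)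
    (g : EuclideanSpace ℝ (Fin d) → Fin C → ℝ)
    (hg : ∀ z c, g z c = ⟪w c, z⟫ + b c)
    (p : EuclideanSpace ℝ (Fin d) → Fin C → ℝ)
    (hp : ∀ z, p z = softmax (g z))
    (z₀ : EuclideanSpace ℝ (Fin d)) (lam : ℝ) (hlam : 0 ≤ lam)
    (Sig : Matrix (Fin d) (Fin d) ℝ) (hSig : Sig.PosSemidef) :
    (∀ x y : EuclideanSpace ℝ (Fin d), 0 ≤ -Real.log (∑ c, p x c * p y c)) ∧
    (∫⁻ y, ∫⁻ x, ENNReal.ofReal (-Real.log (∑ c, p x c * p y c))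
        ∂(multiGaussian z₀ (lam • Sig) (posSemidef_smul hSig hlam))
        ∂(multiGaussian z₀ (lam • Sig) (posSemidef_smul hSig hlam)))
      ≤ ENNReal.ofReal (-2 * ∑ c, Real.log (Real.exp (g z₀ c) /
          ∑ c', Real.exp (g z₀ c' + lam / 2 * quadForm Sig (w c' - w c)))) :=
  ifa_upper_bound_general d C hC w b g hg p hp z₀ lam hlam Sig hSig
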